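/- arXiv:1903.04737 — 3 statements merged into one kernel-verified Lean document; each statement's English description precedes it below -/
import Mathlib

section
/- Let A be a red–blue arrangement with exactly r red segments. Then every non-crossing subset of A has cardinality at most r. -/
/-- The Euclidean plane. -/
abbrev Plane : Type := EuclideanSpace ℝ (Fin 2)

/-- A segment: the closed convex hull of two distinct points of the plane. -/
structure Seg where
  p : Plane
  q : Plane
  ne : p ≠ q

/-- The point set of a segment (the closed segment `[p, q]`). -/
def Seg.pts (s : Seg) : Set Plane := segment ℝ s.p s.q

/-- The relative interior of a segment (the open segment `(p, q)`). -/
def Seg.relint (s : Seg) : Set Plane := openSegment ℝ s.p s.q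

/-- Two segments cross if their intersection is a single point lying in the
relative interior of both. -/
def Crosses (s t : Seg) : Prop :=
  ∃ x : Plane, s.pts ∩ t.pts = {x} ∧ x ∈ s.relint ∧ x ∈ t.relint

/-- A red–blue arrangement: a finite set `A` of segments, each colored red
(`red s = true`) or blue (`red s = false`), such that (1) any two distinct
segments are disjoint or cross, (2) no point lies on three or more segments,
(3) each blue segment crosses exactly two segments, both red, (4) each red
segment crosses exactly three segments, exactly two of which are blue, and
(5) the union of the segments is a connected subset of the plane. -/
structure IsRBArrangement (A : Set Seg) (red : Seg → Bool) : Prop where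
  finite : A.Finite
  disjoint_or_cross : ∀ s ∈ A, ∀ t ∈ A, s ≠ t → Disjoint s.pts t.pts ∨ Crosses s t
  no_triple : ∀ x : Plane, {s ∈ A | x ∈ s.pts}.ncard ≤ 2
  blue_cross : ∀ s ∈ A, red s = false →
    {t ∈ A | Crosses s t}.ncard = 2 ∧ ∀ t ∈ A, Crosses s t → red t = true
  red_cross : ∀ s ∈ A, red s = true →
    {t ∈ A | Crosses s t}.ncard = 3 ∧ {t ∈ A | Crosses s t ∧ red t = false}.ncard = 2
  connected : IsConnected (⋃ s ∈ A, s.pts)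

/-- A set of segments is non-crossing if no two of its segments cross. -/
def NonCrossing (S : Set Seg) : Prop := ∀ s ∈ S, ∀ t ∈ S, ¬ Crosses s t

/-- The bichromatic crossing graph of an arrangement: two segments of `A` are
adjacent exactly when they cross and have different colors. -/
def bicrossGraph (A : Set Seg) (red : Seg → Bool) : SimpleGraph Seg where
  Adj s t := s ∈ A ∧ t ∈ A ∧ Crosses s t ∧ red s ≠ red t
  symm := by
    refine ⟨?_⟩
    rintro s t ⟨hs, ht, ⟨x, hx, h1, h2⟩, hc⟩
    exact ⟨ht, hs, ⟨x, by rwa [Set.inter_comm], h2, h1⟩, Ne.symm hc⟩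
  loopless := by refine ⟨?_⟩; rintro s ⟨_, _, _, h⟩; exact h rfl

/-- `C` is the vertex set of a connected component of the bichromatic crossing
graph of the arrangement `A`. -/
def IsCompVtxSet (A : Set Seg) (red : Seg → Bool) (C : Set Seg) : Prop :=
  ∃ s ∈ A, C = {t ∈ A | (bicrossGraph A red).Reachable s t}

lemma crosses_symm {s t : Seg} (h : Crosses s t) : Crosses t s := by
  obtain ⟨x, hx, h1, h2⟩ := h
  exact ⟨x, by rwa [Set.inter_comm], h2, h1⟩

/-- In a red–blue arrangement with exactly `r` red segments, every
non-crossing subset has cardinality at most `r`. -/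
theorem noncrossing_card_le (A : Set Seg) (red : Seg → Bool)
    (hA : IsRBArrangement A red) (r : ℕ)
    (hr : {s ∈ A | red s = true}.ncard = r)
    (S : Set Seg) (hS : S ⊆ A) (hnc : NonCrossing S) :
    S.ncard ≤ r := by
  classical
  have hAfin := hA.finite
  set Af : Finset Seg := hAfin.toFinset with hAf
  have hmemA : ∀ s, s ∈ Af ↔ s ∈ A := fun s => hAfin.mem_toFinset
  set P : Finset (Seg × Seg) :=
    (Af ×ˢ Af).filter (fun p => red p.1 = false ∧ red p.2 = true ∧ Crosses p.1 p.2) with hP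
  have hPmem : ∀ p : Seg × Seg, p ∈ P ↔ p.1 ∈ A ∧ p.2 ∈ A ∧
      red p.1 = false ∧ red p.2 = true ∧ Crosses p.1 p.2 := by
    intro p
    simp [hP, Finset.mem_filter, Finset.mem_product, hmemA, and_assoc]
  -- fiber over a blue segment (first coordinate)
  have fiber1 : ∀ s ∈ A, red s = false → (P.filter (fun p => p.1 = s)).card = 2 := by
    intro s hs hsb
    obtain ⟨hc2, hallred⟩ := hA.blue_cross s hs hsb
    have hNs : (Af.filter (fun t => Crosses s t)).card = 2 := by
      have hset : {t ∈ A | Crosses s t} = ↑(Af.filter (fun t => Crosses s t)) := by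
        ext t; simp [hmemA]
      rw [hset, Set.ncard_coe_finset] at hc2
      exact hc2
    have himg : P.filter (fun p => p.1 = s) =
        (Af.filter (fun t => Crosses s t)).image (fun t => (s, t)) := by
      ext ⟨a, b⟩
      simp only [Finset.mem_filter, Finset.mem_image, hPmem, hmemA, Prod.mk.injEq]
      constructor
      · rintro ⟨⟨h1, h2, h3, h4, h5⟩, rfl⟩
        exact ⟨b, ⟨h2, h5⟩, rfl, rfl⟩
      · rintro ⟨t, ⟨ht, hct⟩, rfl, rfl⟩
        exact ⟨⟨hs, ht, hsb, hallred t ht hct, hct⟩, rfl⟩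
    rw [himg, Finset.card_image_of_injective _ (fun a b h => by simpa using h)]
    exact hNs
  -- fiber over a red segment (second coordinate)
  have fiber2 : ∀ s ∈ A, red s = true → (P.filter (fun p => p.2 = s)).card = 2 := by
    intro s hs hsr
    obtain ⟨_, hc2⟩ := hA.red_cross s hs hsr
    have hNs : (Af.filter (fun t => Crosses s t ∧ red t = false)).card = 2 := by
      have hset : {t ∈ A | Crosses s t ∧ red t = false} =
          ↑(Af.filter (fun t => Crosses s t ∧ red t = false)) := by
        ext t; simp [hmemA]
      rw [hset, Set.ncard_coe_finset] at hc2
      exact hc2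
    have himg : P.filter (fun p => p.2 = s) =
        (Af.filter (fun t => Crosses s t ∧ red t = false)).image (fun t => (t, s)) := by
      ext ⟨a, b⟩
      simp only [Finset.mem_filter, Finset.mem_image, hPmem, hmemA, Prod.mk.injEq]
      constructor
      · rintro ⟨⟨h1, h2, h3, h4, h5⟩, rfl⟩
        exact ⟨a, ⟨h1, crosses_symm h5, h3⟩, rfl, rfl⟩
      · rintro ⟨t, ⟨ht, hct, htb⟩, rfl, rfl⟩
        exact ⟨⟨ht, hs, htb, hsr, crosses_symm hct⟩, rfl⟩
    rw [himg, Finset.card_image_of_injective _ (fun a b h => by simpa using h)]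
    exact hNs
  -- |P| = 2 r, counting by second coordinate
  have hrcard : (Af.filter (fun s => red s = true)).card = r := by
    have hset : {s ∈ A | red s = true} = ↑(Af.filter (fun s => red s = true)) := by
      ext t; simp [hmemA]
    rw [hset, Set.ncard_coe_finset] at hr
    exact hr
  have hPcard : P.card = 2 * r := by
    have h1 : P.card = ∑ s ∈ Af, (P.filter (fun p => p.2 = s)).card :=
      Finset.card_eq_sum_card_fiberwise (fun p hp => (hmemA _).2 ((hPmem p).1 hp).2.1)
    rw [h1, ← Finset.sum_filter_add_sum_filter_not Af (fun s => red s = true)]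
    have h2 : ∑ s ∈ Af.filter (fun s => ¬ red s = true), (P.filter (fun p => p.2 = s)).card = 0 := by
      apply Finset.sum_eq_zero
      intro s hsm
      rw [Finset.mem_filter] at hsm
      rw [Finset.card_eq_zero]
      apply Finset.filter_eq_empty_iff.2
      intro p hp h
      exact hsm.2 (h ▸ ((hPmem p).1 hp).2.2.2.1)
    have h3 : ∑ s ∈ Af.filter (fun s => red s = true), (P.filter (fun p => p.2 = s)).card
        = 2 * r := by
      rw [Finset.sum_congr rfl (fun s hsm => fiber2 s
        ((hmemA s).1 (Finset.mem_filter.1 hsm).1) (Finset.mem_filter.1 hsm).2)]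
      simp [hrcard, mul_comm]
    rw [h2, add_zero, h3]
  -- now count pairs incident to S
  have hSfin : S.Finite := hAfin.subset hS
  set SF : Finset Seg := hSfin.toFinset with hSF
  have hmemS : ∀ s, s ∈ SF ↔ s ∈ S := fun s => hSfin.mem_toFinset
  set Q : Seg → Finset (Seg × Seg) := fun s => P.filter (fun p => p.1 = s ∨ p.2 = s) with hQ
  have hQcard : ∀ s ∈ SF, (Q s).card = 2 := by
    intro s hsS
    have hsA : s ∈ A := hS ((hmemS s).1 hsS)
    cases hred : red s with
    | false =>
      have : Q s = P.filter (fun p => p.1 = s) := by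
        apply Finset.filter_congr
        intro p hp
        constructor
        · rintro (h | h)
          · exact h
          · exact absurd (h ▸ ((hPmem p).1 hp).2.2.2.1) (by simp [hred])
        · exact Or.inl
      rw [this]; exact fiber1 s hsA hred
    | true =>
      have : Q s = P.filter (fun p => p.2 = s) := by
        apply Finset.filter_congr
        intro p hp
        constructor
        · rintro (h | h)
          · exact absurd (h ▸ ((hPmem p).1 hp).2.2.1) (by simp [hred])
          · exact h
        · exact Or.inr
      rw [this]; exact fiber2 s hsA hred
  have hdisj : ∀ s ∈ SF, ∀ t ∈ SF, s ≠ t → Disjoint (Q s) (Q t) := by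
    intro s hsS t htS hst
    rw [Finset.disjoint_left]
    intro p hps hpt
    rw [hQ, Finset.mem_filter] at hps hpt
    obtain ⟨hp, h1⟩ := hps
    obtain ⟨_, h2⟩ := hpt
    obtain ⟨_, _, _, _, hc⟩ := (hPmem p).1 hp
    have hsS' := (hmemS s).1 hsS
    have htS' := (hmemS t).1 htS
    rcases h1 with h1 | h1 <;> rcases h2 with h2 | h2
    · exact hst (h1 ▸ h2 ▸ rfl)
    · exact hnc s hsS' t htS' (h1 ▸ h2 ▸ hc)
    · exact hnc t htS' s hsS' (h2 ▸ h1 ▸ hc)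
    · exact hst (h1 ▸ h2 ▸ rfl)
  have hbU : (SF.biUnion Q).card = 2 * SF.card := by
    rw [Finset.card_biUnion hdisj, Finset.sum_congr rfl hQcard]
    simp [mul_comm]
  have hsub : SF.biUnion Q ⊆ P := by
    intro p hp
    rw [Finset.mem_biUnion] at hp
    obtain ⟨s, _, hps⟩ := hp
    exact (Finset.mem_filter.1 hps).1
  have hle : 2 * SF.card ≤ 2 * r := by
    rw [← hbU, ← hPcard]
    exact Finset.card_le_card hsub
  have : S.ncard = SF.card := by
    rw [← hSfin.coe_toFinset, Set.ncard_coe_finset]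
  omega
end

section
/- Let M ≥ 1 be a real number and let a, b, c ∈ ℤ² ⊆ ℝ² be three points that are not collinear and whose coordinates all have absolute value at most M. Then the angle at vertex a of the triangle abc (that is, the angle between the vectors b − a and c − a) is at least 1/(8M²). -/
open EuclideanGeometry in
/-- If `a`, `b`, `c` are non-collinear integer points whose coordinates all
have absolute value at most `M ≥ 1`, then the angle of the triangle `abc` at
the vertex `a` is at least `1 / (8 M²)`. -/
theorem grid_triangle_angle_lower_bound (M : ℝ) (hM : 1 ≤ M)
    (a b c : Plane)
    (ha : ∀ i : Fin 2, (∃ k : ℤ, a i = (k : ℝ)) ∧ |a i| ≤ M)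
    (hb : ∀ i : Fin 2, (∃ k : ℤ, b i = (k : ℝ)) ∧ |b i| ≤ M)
    (hc : ∀ i : Fin 2, (∃ k : ℤ, c i = (k : ℝ)) ∧ |c i| ≤ M)
    (hcol : ¬ Collinear ℝ ({a, b, c} : Set Plane)) :
    1 / (8 * M ^ 2) ≤ ∠ b a c := by
  have hM0 : (0:ℝ) < M := lt_of_lt_of_le one_pos hM
  set u : Plane := b - a with hu
  set v : Plane := c - a with hv
  obtain ⟨ka0, hka0⟩ := (ha 0).1
  obtain ⟨ka1, hka1⟩ := (ha 1).1
  obtain ⟨kb0, hkb0⟩ := (hb 0).1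
  obtain ⟨kb1, hkb1⟩ := (hb 1).1
  obtain ⟨kc0, hkc0⟩ := (hc 0).1
  obtain ⟨kc1, hkc1⟩ := (hc 1).1
  have hu0 : u 0 = b 0 - a 0 := rfl
  have hu1 : u 1 = b 1 - a 1 := rfl
  have hv0 : v 0 = c 0 - a 0 := rfl
  have hv1 : v 1 = c 1 - a 1 := rfl
  set d : ℤ := (kb0 - ka0) * (kc1 - ka1) - (kb1 - ka1) * (kc0 - ka0) with hdd
  have hdet : (d : ℝ) = u 0 * v 1 - u 1 * v 0 := by
    push_cast [hdd, hu0, hu1, hv0, hv1, hka0, hka1, hkb0, hkb1, hkc0, hkc1]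
    ring
  have hd0 : d ≠ 0 := by
    intro h
    apply hcol
    have hdet0 : u 0 * v 1 - u 1 * v 0 = 0 := by rw [← hdet, h]; norm_num
    rw [collinear_iff_of_mem (Set.mem_insert a _)]
    by_cases hba : b = a
    · refine ⟨v, ?_⟩
      intro p hp
      simp only [Set.mem_insert_iff, Set.mem_singleton_iff] at hp
      rcases hp with h' | h' | h'
      · exact ⟨0, by rw [h']; simp⟩
      · exact ⟨0, by rw [h', hba]; simp⟩
      · refine ⟨1, ?_⟩
        rw [h', vadd_eq_add, one_smul, hv]
        abel
    · have hune : u ≠ 0 := sub_ne_zero.mpr hba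
      have hex : ∃ r : ℝ, v = r • u := by
        by_cases h0 : u 0 = 0
        · have h1 : u 1 ≠ 0 := by
            intro h1
            apply hune
            ext i
            fin_cases i <;> simp_all
          have hv00 : v 0 = 0 := by
            have h2 : u 1 * v 0 = 0 := by rw [h0] at hdet0; linarith
            exact (mul_eq_zero.mp h2).resolve_left h1
          refine ⟨v 1 / u 1, ?_⟩
          ext i
          fin_cases i
          · show v 0 = v 1 / u 1 * u 0
            rw [h0, hv00]; ring
          · show v 1 = v 1 / u 1 * u 1
            field_simp
        · refine ⟨v 0 / u 0, ?_⟩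
          ext i
          fin_cases i
          · show v 0 = v 0 / u 0 * u 0
            field_simp
          · show v 1 = v 0 / u 0 * u 1
            field_simp
            linear_combination hdet0
      obtain ⟨r, hr⟩ := hex
      refine ⟨u, ?_⟩
      intro p hp
      simp only [Set.mem_insert_iff, Set.mem_singleton_iff] at hp
      rcases hp with h' | h' | h'
      · exact ⟨0, by rw [h']; simp⟩
      · refine ⟨1, ?_⟩
        rw [h', vadd_eq_add, one_smul, hu]
        abel
      · refine ⟨r, ?_⟩
        rw [h', vadd_eq_add, ← hr, hv]
        abel
  have hd1 : (1:ℝ) ≤ |(d:ℝ)| := by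
    rw [← Int.cast_abs]
    exact_mod_cast Int.one_le_abs hd0
  have hinner : (inner ℝ u v : ℝ) = u 0 * v 0 + u 1 * v 1 := by
    simp [PiLp.inner_apply, Fin.sum_univ_two]
    ring
  have hinneruu : (inner ℝ u u : ℝ) = u 0 * u 0 + u 1 * u 1 := by
    rw [real_inner_self_eq_norm_sq, EuclideanSpace.norm_eq, Real.sq_sqrt (by positivity), Fin.sum_univ_two]
    simp [sq]
  have hinnervv : (inner ℝ v v : ℝ) = v 0 * v 0 + v 1 * v 1 := by
    rw [real_inner_self_eq_norm_sq, EuclideanSpace.norm_eq, Real.sq_sqrt (by positivity), Fin.sum_univ_two]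
    simp [sq]
  have hsin := InnerProductGeometry.sin_angle_mul_norm_mul_norm u v
  have hlag : (inner ℝ u u : ℝ) * (inner ℝ v v : ℝ) - (inner ℝ u v : ℝ) * (inner ℝ u v : ℝ)
      = (d:ℝ)^2 := by
    rw [hinner, hinneruu, hinnervv, hdet]; ring
  rw [hlag, Real.sqrt_sq_eq_abs] at hsin
  have hangle : ∠ b a c = InnerProductGeometry.angle u v := by
    rw [EuclideanGeometry.angle, hu, hv]
    norm_num [vsub_eq_sub]
  set θ := InnerProductGeometry.angle u v with hθ
  have hbound : ∀ (w : Plane), |w 0| ≤ 2*M → |w 1| ≤ 2*M → ‖w‖ ≤ Real.sqrt 8 * M := by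
    intro w h0 h1
    rw [EuclideanSpace.norm_eq]
    simp only [Real.norm_eq_abs, sq_abs]
    have h2 : ∑ i : Fin 2, w i ^ 2 = w 0 ^ 2 + w 1 ^ 2 := Fin.sum_univ_two _
    rw [h2]
    have h8 : w 0 ^ 2 + w 1 ^ 2 ≤ 8 * M ^ 2 := by
      have e0 : w 0 ^ 2 ≤ (2*M)^2 := by
        rw [← sq_abs]; exact pow_le_pow_left₀ (abs_nonneg _) h0 2
      have e1 : w 1 ^ 2 ≤ (2*M)^2 := by
        rw [← sq_abs]; exact pow_le_pow_left₀ (abs_nonneg _) h1 2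
      have e2 : (2*M)^2 = 4*M^2 := by ring
      linarith
    calc Real.sqrt (w 0 ^ 2 + w 1 ^ 2) ≤ Real.sqrt (8 * M ^ 2) := Real.sqrt_le_sqrt h8
    _ = Real.sqrt 8 * M := by
        rw [Real.sqrt_mul (by norm_num), Real.sqrt_sq hM0.le]
  have habs : ∀ (x y : ℝ), |x| ≤ M → |y| ≤ M → |x - y| ≤ 2 * M := by
    intro x y hx hy
    have := abs_le.mp hx; have := abs_le.mp hy
    rw [abs_le]; constructor <;> linarith
  have hnu : ‖u‖ ≤ Real.sqrt 8 * M :=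
    hbound u (hu0 ▸ habs _ _ (hb 0).2 (ha 0).2) (hu1 ▸ habs _ _ (hb 1).2 (ha 1).2)
  have hnv : ‖v‖ ≤ Real.sqrt 8 * M :=
    hbound v (hv0 ▸ habs _ _ (hc 0).2 (ha 0).2) (hv1 ▸ habs _ _ (hc 1).2 (ha 1).2)
  have hnn : ‖u‖ * ‖v‖ ≤ 8 * M ^ 2 := by
    have h8 : Real.sqrt 8 * Real.sqrt 8 = 8 := Real.mul_self_sqrt (by norm_num)
    calc ‖u‖ * ‖v‖ ≤ (Real.sqrt 8 * M) * (Real.sqrt 8 * M) :=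
          mul_le_mul hnu hnv (norm_nonneg v) (by positivity)
    _ = 8 * M ^ 2 := by
        rw [show (Real.sqrt 8 * M) * (Real.sqrt 8 * M)
          = (Real.sqrt 8 * Real.sqrt 8) * M^2 by ring, h8]
  have hsinnonneg : 0 ≤ Real.sin θ :=
    Real.sin_nonneg_of_nonneg_of_le_pi (InnerProductGeometry.angle_nonneg u v)
      (InnerProductGeometry.angle_le_pi u v)
  have hsinpos : 1 / (8 * M ^ 2) ≤ Real.sin θ := by
    rw [div_le_iff₀ (by positivity : (0:ℝ) < 8 * M ^ 2)]
    calc (1:ℝ) ≤ |(d:ℝ)| := hd1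
    _ = Real.sin θ * (‖u‖ * ‖v‖) := hsin.symm
    _ ≤ Real.sin θ * (8 * M ^ 2) := mul_le_mul_of_nonneg_left hnn hsinnonneg
  have hθ0 : 0 ≤ θ := InnerProductGeometry.angle_nonneg u v
  rw [hangle]
  calc 1 / (8 * M ^ 2) ≤ Real.sin θ := hsinpos
  _ ≤ θ := Real.sin_le hθ0
end

section
/- Let p, q, v ∈ ℤ² ⊆ ℝ² with p ≠ q and v not collinear with p and q. Then the Euclidean distance from v to every point of the closed segment [p, q] is at least 1 / dist(p, q); that is, the infimum of distances from v to points of the segment [p, q] is at least 1 / dist(p, q). -/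
lemma cross_le_sqrt (a b c d : ℝ) :
    |a * d - b * c| ≤ Real.sqrt (a ^ 2 + b ^ 2) * Real.sqrt (c ^ 2 + d ^ 2) := by
  rw [← Real.sqrt_mul (by positivity), ← Real.sqrt_sq_eq_abs]
  apply Real.sqrt_le_sqrt
  nlinarith [sq_nonneg (a * c + b * d)]

/-- If `p`, `q`, `v` are integer points of the plane with `p ≠ q` and `v` not
collinear with `p` and `q`, then every point of the closed segment `[p, q]` is
at distance at least `1 / dist p q` from `v`; in particular the infimum of
distances from `v` to the segment is at least `1 / dist p q`. -/
theorem grid_point_segment_distance (p q v : Plane)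
    (hp : ∀ i : Fin 2, ∃ k : ℤ, p i = (k : ℝ))
    (hq : ∀ i : Fin 2, ∃ k : ℤ, q i = (k : ℝ))
    (hv : ∀ i : Fin 2, ∃ k : ℤ, v i = (k : ℝ))
    (hpq : p ≠ q)
    (hcol : ¬ Collinear ℝ ({p, q, v} : Set Plane)) :
    (∀ x ∈ segment ℝ p q, 1 / dist p q ≤ dist v x) ∧
    1 / dist p q ≤ Metric.infDist v (segment ℝ p q) := by
  obtain ⟨p0, hp0⟩ := hp 0
  obtain ⟨p1, hp1⟩ := hp 1
  obtain ⟨q0, hq0⟩ := hq 0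
  obtain ⟨q1, hq1⟩ := hq 1
  obtain ⟨v0, hv0⟩ := hv 0
  obtain ⟨v1, hv1⟩ := hv 1
  have hdist : ∀ x y : Plane,
      dist x y = Real.sqrt ((x 0 - y 0) ^ 2 + (x 1 - y 1) ^ 2) := by
    intro x y
    rw [EuclideanSpace.dist_eq, Fin.sum_univ_two]
    simp [Real.dist_eq, sq_abs]
  have hdpq : 0 < dist p q := dist_pos.mpr hpq
  set D : ℤ := (q0 - p0) * (v1 - p1) - (q1 - p1) * (v0 - p0) with hDdef
  have hD : D ≠ 0 := by
    intro hD0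
    apply hcol
    have hne : (q0 : ℤ) ≠ p0 ∨ (q1 : ℤ) ≠ p1 := by
      by_contra h
      push_neg at h
      apply hpq
      have e0 : p 0 = q 0 := by rw [hp0, hq0, h.1]
      have e1 : p 1 = q 1 := by rw [hp1, hq1, h.2]
      ext i
      fin_cases i
      exacts [e0, e1]
    rw [collinear_iff_of_mem (Set.mem_insert p _)]
    refine ⟨q - p, ?_⟩
    rintro x (rfl | rfl | rfl)
    · exact ⟨0, by simp⟩
    · exact ⟨1, by simp⟩
    · rcases hne with h | h
      · have h0 : (q0 : ℝ) - p0 ≠ 0 := by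
          intro hc
          exact h (by exact_mod_cast sub_eq_zero.mp hc)
        set t : ℝ := ((v0 : ℝ) - p0) / ((q0 : ℝ) - p0) with htdef
        have hrel : ((v1 : ℝ) - p1) * ((q0 : ℝ) - p0) = ((v0 : ℝ) - p0) * ((q1 : ℝ) - p1) := by
          have h2 : ((v1 - p1) * (q0 - p0) : ℤ) = (v0 - p0) * (q1 - p1) := by
            have : ((q0 - p0) * (v1 - p1) : ℤ) = (q1 - p1) * (v0 - p0) := by omega
            linear_combination this
          exact_mod_cast h2
        have e0 : x 0 = (t • (q - p) +ᵥ p) 0 := by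
          simp only [vadd_eq_add, PiLp.add_apply, PiLp.smul_apply, PiLp.sub_apply, smul_eq_mul]
          rw [hp0, hq0, hv0, htdef]
          field_simp
          ring
        have e1 : x 1 = (t • (q - p) +ᵥ p) 1 := by
          simp only [vadd_eq_add, PiLp.add_apply, PiLp.smul_apply, PiLp.sub_apply, smul_eq_mul]
          rw [hp1, hq1, hv1, htdef]
          field_simp
          linear_combination hrel
        exact ⟨t, by ext i; fin_cases i; exacts [e0, e1]⟩
      · have h0 : (q1 : ℝ) - p1 ≠ 0 := by
          intro hc
          exact h (by exact_mod_cast sub_eq_zero.mp hc)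
        set t : ℝ := ((v1 : ℝ) - p1) / ((q1 : ℝ) - p1) with htdef
        have hrel : ((v0 : ℝ) - p0) * ((q1 : ℝ) - p1) = ((v1 : ℝ) - p1) * ((q0 : ℝ) - p0) := by
          have h2 : ((v0 - p0) * (q1 - p1) : ℤ) = (v1 - p1) * (q0 - p0) := by
            have : ((q0 - p0) * (v1 - p1) : ℤ) = (q1 - p1) * (v0 - p0) := by omega
            linear_combination -this
          exact_mod_cast h2
        have e0 : x 0 = (t • (q - p) +ᵥ p) 0 := by
          simp only [vadd_eq_add, PiLp.add_apply, PiLp.smul_apply, PiLp.sub_apply, smul_eq_mul]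
          rw [hp0, hq0, hv0, htdef]
          field_simp
          linear_combination hrel
        have e1 : x 1 = (t • (q - p) +ᵥ p) 1 := by
          simp only [vadd_eq_add, PiLp.add_apply, PiLp.smul_apply, PiLp.sub_apply, smul_eq_mul]
          rw [hp1, hq1, hv1, htdef]
          field_simp
          ring
        exact ⟨t, by ext i; fin_cases i; exacts [e0, e1]⟩
  have h1 : (1 : ℝ) ≤ |(D : ℝ)| := by
    have h := abs_pos.mpr hD
    have : (1 : ℤ) ≤ |D| := by omega
    calc (1:ℝ) = ((1:ℤ) : ℝ) := by norm_num
      _ ≤ ((|D| : ℤ) : ℝ) := by exact_mod_cast this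
      _ = |(D : ℝ)| := by push_cast; ring
  have key : ∀ x ∈ segment ℝ p q, 1 / dist p q ≤ dist v x := by
    rintro x ⟨a, b, ha, hb, hab, rfl⟩
    set x := a • p + b • q with hxdef
    have hx0 : x 0 = a * p 0 + b * q 0 := by
      simp [hxdef, PiLp.add_apply, PiLp.smul_apply]
    have hx1 : x 1 = a * p 1 + b * q 1 := by
      simp [hxdef, PiLp.add_apply, PiLp.smul_apply]
    have hcross : (q 0 - p 0) * (v 1 - x 1) - (q 1 - p 1) * (v 0 - x 0) = (D : ℝ) := by
      rw [hx0, hx1, hp0, hp1, hq0, hq1, hv0, hv1, hDdef]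
      have hb' : a = 1 - b := by linarith
      push_cast
      rw [hb']
      ring
    have hle : |(D : ℝ)| ≤ dist p q * dist v x := by
      rw [hdist p q, hdist v x, ← hcross]
      have := cross_le_sqrt (q 0 - p 0) (q 1 - p 1) (v 0 - x 0) (v 1 - x 1)
      calc |(q 0 - p 0) * (v 1 - x 1) - (q 1 - p 1) * (v 0 - x 0)|
          ≤ Real.sqrt ((q 0 - p 0) ^ 2 + (q 1 - p 1) ^ 2) *
            Real.sqrt ((v 0 - x 0) ^ 2 + (v 1 - x 1) ^ 2) := this
        _ = Real.sqrt ((p 0 - q 0) ^ 2 + (p 1 - q 1) ^ 2) *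
            Real.sqrt ((v 0 - x 0) ^ 2 + (v 1 - x 1) ^ 2) := by ring_nf
    rw [div_le_iff₀ hdpq]
    calc (1 : ℝ) ≤ |(D : ℝ)| := h1
      _ ≤ dist p q * dist v x := hle
      _ = dist v x * dist p q := by ring
  refine ⟨key, ?_⟩
  by_contra h
  push_neg at h
  obtain ⟨y, hy, hlt⟩ := (Metric.infDist_lt_iff ⟨p, left_mem_segment ℝ p q⟩).mp h
  exact absurd (key y hy) (not_le.mpr hlt)
end
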